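/- There exists a natural number N such that for every even n ≥ N and every m ≥ 1, the number of tuples (α_1,…,α_m) ∈ F_n^m such that no two involutions α_i and α_j (with i ≠ j) share a common orbit is at most (2/3)^{m−1} · |F_n|^m. Equivalently, with probability at least 1 − (2/3)^{m−1}, a uniformly random tuple in F_n^m has at least one pair i < j such that α_i and α_j share a common orbit (i.e., the associated graph G_α has a black edge). -/

import Mathlib

open scoped Classical

/-- The set of fixed-point-free involutions of `{1,…,n}` (modeled on `Fin n`). -/
noncomputable def fpf (n : ℕ) : Finset (Equiv.Perm (Fin n)) :=
  Finset.univ.filter (fun σ => σ * σ = 1 ∧ ∀ i, σ i ≠ i)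

/-!
Fix `β ∈ F_n` and let `t(α)` count the points where `α` and `β` agree. Conjugating by
transpositions shows that the `α ∈ F_n` with `α x = c` are a `1/(n-1)` fraction of `F_n`, and those
with moreover `α y = d` (for `d ∉ {x, c, y}`) a `1/(n-3)` fraction of these. This gives the first
two factorial moments of `t`, namely `n/(n-1)` and `n((n-3) + (n-2))/((n-1)(n-3))`. Since
`(t-2)(t-3)` is nonnegative on integers and equals `6` at `t = 0`, the proportion of `α` with
`t(α) = 0` is at most `E[(t-2)(t-3)]/6`, which is at most `2/3` once `n ≥ 6`. In a tuple with no
common orbits the first involution shares no orbit with the second, so given the rest of the tuple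
there are at most `(2/3)|F_n|` choices for it; induction on `m` gives the bound.
-/

open Finset Equiv

lemma sub_two_mul_sub_three_nonneg (t : ℤ) : 0 ≤ (t - 2) * (t - 3) := by
  rcases le_or_gt t 2 with h | h
  · exact mul_nonneg_of_nonpos_of_nonpos (by omega) (by omega)
  · exact mul_nonneg (by omega) (by omega)

lemma six_mul_card_filter_eq_zero_le {ι : Type*} (s : Finset ι) (t : ι → ℕ) :
    6 * (#{i ∈ s | t i = 0} : ℤ) ≤ ∑ i ∈ s, ((t i : ℤ) - 2) * ((t i : ℤ) - 3) := by
  rw [card_filter, Nat.cast_sum, mul_sum]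
  refine sum_le_sum fun i _ => ?_
  split_ifs with h
  · simp [h]
  · simpa using sub_two_mul_sub_three_nonneg (t i)

section FixedPointFreeInvolutions

variable {n : ℕ}

lemma mem_fpf {σ : Perm (Fin n)} : σ ∈ fpf n ↔ σ * σ = 1 ∧ ∀ i, σ i ≠ i := by
  simp [fpf]

lemma apply_apply_of_mem_fpf {σ : Perm (Fin n)} (hσ : σ ∈ fpf n) (x : Fin n) : σ (σ x) = x := by
  simpa using congr($((mem_fpf.1 hσ).1) x)

lemma apply_ne_of_mem_fpf {σ : Perm (Fin n)} (hσ : σ ∈ fpf n) (x : Fin n) : σ x ≠ x :=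
  (mem_fpf.1 hσ).2 x

lemma conj_mem_fpf (π : Perm (Fin n)) {σ : Perm (Fin n)} (hσ : σ ∈ fpf n) :
    π⁻¹ * σ * π ∈ fpf n := by
  refine mem_fpf.2 ⟨?_, fun i hi => apply_ne_of_mem_fpf hσ (π i) ?_⟩
  · rw [show π⁻¹ * σ * π * (π⁻¹ * σ * π) = π⁻¹ * (σ * σ) * π by group, (mem_fpf.1 hσ).1]
    group
  · rw [Perm.mul_apply, Perm.mul_apply, Perm.inv_eq_iff_eq] at hi
    exact hi

lemma card_fpf_filter_conj (π : Perm (Fin n)) (p : Perm (Fin n) → Prop) [DecidablePred p] :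
    #{α ∈ fpf n | p (π⁻¹ * α * π)} = #{α ∈ fpf n | p α} := by
  refine card_nbij' (fun α => π⁻¹ * α * π) (fun α => π * α * π⁻¹) ?_ ?_ ?_ ?_
  · intro α hα
    simp only [coe_filter, Set.mem_ofPred_eq] at hα ⊢
    exact ⟨conj_mem_fpf π hα.1, hα.2⟩
  · intro α hα
    simp only [coe_filter, Set.mem_ofPred_eq] at hα ⊢
    refine ⟨by simpa using conj_mem_fpf π⁻¹ hα.1, by simpa [mul_assoc] using hα.2⟩
  · intro α _; group
  · intro α _; group

lemma card_fpf_apply_eq_congr {x c c' : Fin n} (hc : c ≠ x) (hc' : c' ≠ x) :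
    #{α ∈ fpf n | α x = c} = #{α ∈ fpf n | α x = c'} := by
  rw [← card_fpf_filter_conj (swap c c')]
  congr 1
  refine filter_congr fun α _ => ?_
  simp [Perm.mul_apply, swap_apply_of_ne_of_ne hc.symm hc'.symm, swap_apply_eq_iff]

lemma card_fpf_apply_eq_apply_eq_congr {x y c d d' : Fin n} (hdx : d ≠ x) (hdc : d ≠ c)
    (hdy : d ≠ y) (hd'x : d' ≠ x) (hd'c : d' ≠ c) (hd'y : d' ≠ y) :
    #{α ∈ fpf n | α x = c ∧ α y = d} = #{α ∈ fpf n | α x = c ∧ α y = d'} := by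
  rw [← card_fpf_filter_conj (swap d d')]
  congr 1
  refine filter_congr fun α _ => ?_
  simp [Perm.mul_apply, swap_apply_of_ne_of_ne hdx.symm hd'x.symm,
    swap_apply_of_ne_of_ne hdy.symm hd'y.symm, swap_apply_eq_iff,
    swap_apply_of_ne_of_ne hdc.symm hd'c.symm]

lemma sub_one_mul_card_fpf_apply_eq {x c : Fin n} (hc : c ≠ x) :
    (n - 1) * #{α ∈ fpf n | α x = c} = #(fpf n) := by
  have hmaps : ∀ α ∈ fpf n, α x ∈ univ.erase x := fun α hα =>
    mem_erase.2 ⟨apply_ne_of_mem_fpf hα x, mem_univ _⟩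
  rw [card_eq_sum_card_fiberwise hmaps,
    sum_congr rfl fun c' hc' => card_fpf_apply_eq_congr (ne_of_mem_erase hc') hc,
    sum_const, card_erase_of_mem (mem_univ x), card_univ, Fintype.card_fin, smul_eq_mul]

lemma sub_three_mul_card_fpf_apply_eq_apply_eq {x y c d : Fin n} (hcx : c ≠ x) (hyx : y ≠ x)
    (hyc : y ≠ c) (hdx : d ≠ x) (hdc : d ≠ c) (hdy : d ≠ y) :
    (n - 3) * #{α ∈ fpf n | α x = c ∧ α y = d} = #{α ∈ fpf n | α x = c} := by
  have hmaps : ∀ α ∈ {α ∈ fpf n | α x = c}, α y ∈ univ \ {x, c, y} := by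
    intro α hα
    obtain ⟨hα, hαx⟩ := mem_filter.1 hα
    have hαc : α c = x := by rw [← hαx, apply_apply_of_mem_fpf hα]
    simp only [mem_sdiff, mem_univ, mem_insert, mem_singleton, true_and, not_or]
    refine ⟨fun h => hyc ?_, fun h => hyx ?_, apply_ne_of_mem_fpf hα y⟩
    · rw [← hαx, ← h, apply_apply_of_mem_fpf hα]
    · rw [← hαc, ← h, apply_apply_of_mem_fpf hα]
  have hcard : #(univ \ {x, c, y}) = n - 3 := by
    rw [card_sdiff_of_subset (subset_univ _), card_univ, Fintype.card_fin,
      card_insert_of_notMem (by simp [hcx.symm, hyx.symm]),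
      card_insert_of_notMem (by simp [hyc.symm]), card_singleton]
  rw [card_eq_sum_card_fiberwise hmaps]
  simp only [filter_filter]
  rw [sum_congr rfl fun e he => ?_, sum_const, hcard, smul_eq_mul]
  simp only [mem_sdiff, mem_univ, mem_insert, mem_singleton, true_and, not_or] at he
  exact card_fpf_apply_eq_apply_eq_congr he.1 he.2.1 he.2.2 hdx hdc hdy

end FixedPointFreeInvolutions

def agreeSet {X : Type*} [Fintype X] [DecidableEq X] (α β : Perm X) : Finset X :=
  {x | α x = β x}

section Moments

variable {n : ℕ} {β : Perm (Fin n)}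

lemma sub_one_mul_sum_card_agreeSet (hβ : β ∈ fpf n) :
    (n - 1) * ∑ α ∈ fpf n, #(agreeSet α β) = n * #(fpf n) := by
  have hdouble := sum_card_bipartiteAbove_eq_sum_card_bipartiteBelow
    (s := fpf n) (t := univ) (r := fun α x => α x = β x)
  simp only [bipartiteAbove, bipartiteBelow] at hdouble
  rw [show ∑ α ∈ fpf n, #(agreeSet α β) = _ from hdouble, mul_sum,
    sum_congr rfl fun x _ => sub_one_mul_card_fpf_apply_eq (apply_ne_of_mem_fpf hβ x),
    sum_const, card_univ, Fintype.card_fin, smul_eq_mul]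

lemma sub_one_mul_sub_three_mul_sum_card_fpf_agree_pair (hβ : β ∈ fpf n) (x : Fin n) :
    (n - 1) * (n - 3) * ∑ y ∈ univ.erase x, #{α ∈ fpf n | α x = β x ∧ α y = β y}
      = (n - 3 + (n - 2)) * #(fpf n) := by
  have hβx : β x ∈ univ.erase x := mem_erase.2 ⟨apply_ne_of_mem_fpf hβ x, mem_univ _⟩
  have hpartner : #{α ∈ fpf n | α x = β x ∧ α (β x) = β (β x)} = #{α ∈ fpf n | α x = β x} := by
    refine congrArg card (filter_congr fun α hα => ?_)
    rw [apply_apply_of_mem_fpf hβ, and_iff_left_iff_imp]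
    intro h
    rw [← h, apply_apply_of_mem_fpf hα]
  have hrest : ∀ y ∈ (univ.erase x).erase (β x),
      (n - 1) * (n - 3) * #{α ∈ fpf n | α x = β x ∧ α y = β y} = #(fpf n) := by
    intro y hy
    obtain ⟨hyβx, hyx⟩ : y ≠ β x ∧ y ≠ x := by simpa using hy
    rw [mul_assoc, sub_three_mul_card_fpf_apply_eq_apply_eq (apply_ne_of_mem_fpf hβ x) hyx hyβx
      (fun h => hyβx ?_) (fun h => hyx (β.injective h)) (apply_ne_of_mem_fpf hβ y),
      sub_one_mul_card_fpf_apply_eq (apply_ne_of_mem_fpf hβ x)]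
    rw [← h, apply_apply_of_mem_fpf hβ]
  have hcard : #((univ.erase x).erase (β x)) = n - 2 := by
    rw [card_erase_of_mem hβx, card_erase_of_mem (mem_univ x), card_univ, Fintype.card_fin,
      Nat.sub_sub]
  rw [← add_sum_erase _ _ hβx, mul_add, mul_sum, sum_congr rfl hrest, sum_const, hcard,
    smul_eq_mul, hpartner, mul_comm (n - 1), mul_assoc, sub_one_mul_card_fpf_apply_eq
    (apply_ne_of_mem_fpf hβ x), add_mul]

lemma sub_one_mul_sub_three_mul_sum_card_offDiag_agreeSet (hβ : β ∈ fpf n) :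
    (n - 1) * (n - 3) * ∑ α ∈ fpf n, #(agreeSet α β).offDiag
      = n * (n - 3 + (n - 2)) * #(fpf n) := by
  have hoff : ∀ α, (agreeSet α β).offDiag =
      {p ∈ (univ : Finset (Fin n × Fin n)) | p.1 ≠ p.2 ∧ α p.1 = β p.1 ∧ α p.2 = β p.2} := by
    intro α
    ext p
    simp only [agreeSet, mem_offDiag, mem_filter, mem_univ, true_and]
    tauto
  have hdouble := sum_card_bipartiteAbove_eq_sum_card_bipartiteBelow (s := fpf n)
    (t := univ) (r := fun α (p : Fin n × Fin n) => p.1 ≠ p.2 ∧ α p.1 = β p.1 ∧ α p.2 = β p.2)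
  simp only [bipartiteAbove, bipartiteBelow, ← hoff] at hdouble
  have hrow : ∀ x : Fin n, ∑ y, #{α ∈ fpf n | x ≠ y ∧ α x = β x ∧ α y = β y}
      = ∑ y ∈ univ.erase x, #{α ∈ fpf n | α x = β x ∧ α y = β y} := by
    intro x
    rw [← sum_erase univ (a := x) (by simp)]
    exact sum_congr rfl fun y hy =>
      congrArg card (filter_congr fun α _ => by simp [(ne_of_mem_erase hy).symm])
  rw [hdouble, ← univ_product_univ, sum_product, mul_sum, sum_congr rfl fun x _ => by
    rw [hrow, sub_one_mul_sub_three_mul_sum_card_fpf_agree_pair hβ x], sum_const, card_univ,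
    Fintype.card_fin, smul_eq_mul, mul_assoc]

lemma three_mul_card_fpf_no_common_orbit_le (hn : 6 ≤ n) (hβ : β ∈ fpf n) :
    3 * #{α ∈ fpf n | ∀ x, α x ≠ β x} ≤ 2 * #(fpf n) := by
  have hzero : {α ∈ fpf n | ∀ x, α x ≠ β x} = {α ∈ fpf n | #(agreeSet α β) = 0} :=
    filter_congr fun α _ => by simp [agreeSet, filter_eq_empty_iff]
  set T : ℤ := ↑(#(fpf n))
  set S₁ : ℤ := ∑ α ∈ fpf n, (#(agreeSet α β) : ℤ)
  set S₂ : ℤ := ∑ α ∈ fpf n, (#(agreeSet α β).offDiag : ℤ)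
  have h₁ : ((n : ℤ) - 1) * S₁ = n * T := by
    have := congrArg (Nat.cast : ℕ → ℤ) (sub_one_mul_sum_card_agreeSet hβ)
    push_cast [Nat.cast_sub (by omega : 1 ≤ n)] at this
    exact this
  have h₂ : ((n : ℤ) - 1) * ((n : ℤ) - 3) * S₂ = n * ((n - 3) + (n - 2)) * T := by
    have := congrArg (Nat.cast : ℕ → ℤ) (sub_one_mul_sub_three_mul_sum_card_offDiag_agreeSet hβ)
    push_cast [Nat.cast_sub (by omega : 1 ≤ n), Nat.cast_sub (by omega : 2 ≤ n),
      Nat.cast_sub (by omega : 3 ≤ n)] at this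
    exact this
  have hbonf : 6 * (#{α ∈ fpf n | ∀ x, α x ≠ β x} : ℤ) ≤ S₂ - 4 * S₁ + 6 * T := by
    rw [hzero]
    refine (six_mul_card_filter_eq_zero_le _ _).trans_eq ?_
    simp only [S₁, S₂, T, card_eq_sum_ones (fpf n), Nat.cast_sum, mul_sum, ← sum_sub_distrib,
      ← sum_add_distrib]
    refine sum_congr rfl fun α _ => ?_
    rw [offDiag_card, Nat.cast_sub (Nat.le_mul_self _)]
    push_cast
    ring
  have hmoments : ((n : ℤ) - 1) * ((n : ℤ) - 3) * (S₂ + 2 * T - 4 * S₁) = (6 - n) * T := by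
    linear_combination h₂ - 4 * ((n : ℤ) - 3) * h₁
  have hpos : (0 : ℤ) < ((n : ℤ) - 1) * ((n : ℤ) - 3) := by
    have : (6 : ℤ) ≤ n := by exact_mod_cast hn
    nlinarith
  have hT : (0 : ℤ) ≤ T := Nat.cast_nonneg _
  have : S₂ + 2 * T - 4 * S₁ ≤ 0 := by
    refine le_of_mul_le_mul_left ?_ hpos
    rw [hmoments, mul_zero]
    exact mul_nonpos_of_nonpos_of_nonneg (by omega) hT
  omega

end Moments

noncomputable def noCommonOrbitTuples (n m : ℕ) : Finset (Fin m → Perm (Fin n)) :=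
  univ.filter fun α => (∀ i, α i ∈ fpf n) ∧ ∀ i j : Fin m, i ≠ j → ¬ ∃ x, α i x = α j x

section Tuples

variable {n : ℕ}

lemma card_noCommonOrbitTuples_one_le : #(noCommonOrbitTuples n 1) ≤ #(fpf n) :=
  card_le_card_of_injOn (fun α => α 0) (fun α hα => (mem_filter.1 hα).2.1 0)
    fun α _ β _ h => funext fun i => by rwa [Subsingleton.elim i 0]

lemma card_fiber_tail_le (m : ℕ) {g : Fin (m + 1) → Perm (Fin n)} :
    #{α ∈ noCommonOrbitTuples n (m + 2) | Fin.tail α = g} ≤ #{σ ∈ fpf n | ∀ x, σ x ≠ g 0 x} := by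
  refine card_le_card_of_injOn (fun α => α 0) (fun α hα => ?_) fun α hα α' hα' h => ?_
  · simp only [noCommonOrbitTuples, coe_filter, mem_filter, mem_univ, true_and,
      Set.mem_ofPred_eq] at hα
    obtain ⟨⟨hfpf, hdisj⟩, rfl⟩ := hα
    exact mem_filter.2 ⟨hfpf 0, fun x hx => hdisj 0 1 (by simp) ⟨x, hx⟩⟩
  · simp only [coe_filter, Set.mem_ofPred_eq] at hα hα'
    rw [← Fin.cons_self_tail α, ← Fin.cons_self_tail α', hα.2, hα'.2]
    simp only at h
    rw [h]

lemma three_mul_card_noCommonOrbitTuples_succ_le (hn : 6 ≤ n) (m : ℕ) :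
    3 * #(noCommonOrbitTuples n (m + 2)) ≤ 2 * #(fpf n) * #(noCommonOrbitTuples n (m + 1)) := by
  have hmaps : ∀ α ∈ noCommonOrbitTuples n (m + 2), Fin.tail α ∈ noCommonOrbitTuples n (m + 1) := by
    intro α hα
    simp only [noCommonOrbitTuples, mem_filter, mem_univ, true_and] at hα ⊢
    exact ⟨fun i => hα.1 i.succ, fun i j hij => hα.2 i.succ j.succ (Fin.succ_injective _ |>.ne hij)⟩
  rw [card_eq_sum_card_fiberwise hmaps, mul_sum, mul_comm _ #(noCommonOrbitTuples n (m + 1)),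
    ← smul_eq_mul, ← sum_const]
  refine sum_le_sum fun g hg => (Nat.mul_le_mul_left 3 (card_fiber_tail_le m)).trans ?_
  exact three_mul_card_fpf_no_common_orbit_le hn ((mem_filter.1 hg).2.1 0)

lemma three_pow_mul_card_noCommonOrbitTuples_le (hn : 6 ≤ n) (k : ℕ) :
    3 ^ k * #(noCommonOrbitTuples n (k + 1)) ≤ 2 ^ k * #(fpf n) ^ (k + 1) := by
  induction k with
  | zero => simpa using card_noCommonOrbitTuples_one_le
  | succ k ih =>
    calc 3 ^ (k + 1) * #(noCommonOrbitTuples n (k + 2))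
        = 3 ^ k * (3 * #(noCommonOrbitTuples n (k + 2))) := by ring
      _ ≤ 3 ^ k * (2 * #(fpf n) * #(noCommonOrbitTuples n (k + 1))) :=
        Nat.mul_le_mul_left _ (three_mul_card_noCommonOrbitTuples_succ_le hn k)
      _ = 2 * #(fpf n) * (3 ^ k * #(noCommonOrbitTuples n (k + 1))) := by ring
      _ ≤ 2 * #(fpf n) * (2 ^ k * #(fpf n) ^ (k + 1)) := by gcongr
      _ = 2 ^ (k + 1) * #(fpf n) ^ (k + 2) := by ring

end Tuples

/-- There exists `N` such that for every even `n ≥ N` and every `m ≥ 1`, the number of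
tuples in `F_n^m` in which no two distinct coordinates share a common orbit is at most
`(2/3)^{m−1}·|F_n|^m`. -/
theorem card_no_common_orbit_le :
    ∃ N : ℕ, ∀ n : ℕ, Even n → N ≤ n → ∀ m : ℕ, 1 ≤ m →
      ((Finset.univ.filter (fun α : Fin m → Equiv.Perm (Fin n) =>
          (∀ i, α i ∈ fpf n) ∧
          ∀ i j : Fin m, i ≠ j → ¬ ∃ x, α i x = α j x)).card : ℝ)
        ≤ (2 / 3 : ℝ) ^ (m - 1) * ((fpf n).card : ℝ) ^ m := by
  refine ⟨6, fun n _ hn m hm => ?_⟩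
  obtain ⟨k, rfl⟩ : ∃ k, m = k + 1 := ⟨m - 1, by omega⟩
  change (#(noCommonOrbitTuples n (k + 1)) : ℝ) ≤ _
  have hbound : (3 : ℝ) ^ k * #(noCommonOrbitTuples n (k + 1)) ≤ 2 ^ k * #(fpf n) ^ (k + 1) := by
    exact_mod_cast three_pow_mul_card_noCommonOrbitTuples_le hn k
  rw [Nat.add_sub_cancel, div_pow, div_mul_eq_mul_div, le_div_iff₀ (by positivity), mul_comm]
  exact hbound
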